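/- Let S⁺, S⁻ ⊆ ℂ⁴ be 2-dimensional complex subspaces with ℂ⁴ = S⁺ ⊕ S⁻, and let L⁺ ⊆ S⁺ be a 1-dimensional subspace. Let q be a ℂ-linear endomorphism of ℂ⁴ with q(S⁺) ⊆ S⁺ and q(S⁻) ⊆ S⁻, and suppose that in the exterior power ⋀²ℂ⁴: (i) (qx)∧y + x∧(qy) = 0 for all x, y ∈ S⁺; (ii) (qx)∧y + x∧(qy) = 0 for all x, y ∈ S⁻; (iii) (qσ)∧s + σ∧(qs) = 0 for all σ ∈ L⁺ and s ∈ S⁻. Then q vanishes on S⁻, q vanishes on L⁺, and q(S⁺) ⊆ L⁺. -/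

import Mathlib

/-!
Choose a basis `σ, τ` of `S⁺` with `L⁺ = ℂ σ` and a basis `s, t` of `S⁻`, and pair the identities
(i)–(iii) with the `2 × 2` minors `x ∧ y ↦ f x * g y - f y * g x` of the dual coordinates; this
turns them into linear equations on the matrix of `q`. Pairing `q x ∧ y + x ∧ q y = 0` with the
dual coordinates of `x` and `y` says that the trace of `q` on the plane `⟨x, y⟩` vanishes; for the
planes `⟨σ, τ⟩, ⟨s, t⟩, ⟨σ, s⟩, ⟨σ, t⟩` this forces all four diagonal entries to vanish, as `2 ≠ 0`.
Replacing one of the two coordinates by a third one shows that every off-diagonal entry vanishes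
except the coefficient of `σ` in `q τ`.
-/

noncomputable section

open ExteriorAlgebra

abbrev C4 := Fin 4 → ℂ

namespace ExteriorAlgebra

variable {R M : Type*} [CommRing R] [AddCommGroup M] [Module R M]

def minor (f g : Module.Dual R M) : ExteriorAlgebra R M →ₗ[R] R :=
  (algebraMapInv : ExteriorAlgebra R M →ₐ[R] R).toLinearMap ∘ₗ
    CliffordAlgebra.contractLeft g ∘ₗ CliffordAlgebra.contractLeft f

theorem minor_ι_mul_ι (f g : Module.Dual R M) (x y : M) :
    minor f g (ι R x * ι R y) = f x * g y - f y * g x := by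
  simp only [minor, ι, LinearMap.coe_comp, AlgHom.coe_toLinearMap, Function.comp_apply,
    CliffordAlgebra.contractLeft_ι_mul, CliffordAlgebra.contractLeft_ι, map_sub, map_smul,
    CliffordAlgebra.contractLeft_algebraMap, mul_zero, sub_zero, AlgHom.commutes,
    Algebra.algebraMap_self, RingHom.id_apply, smul_eq_mul]
  ring

def derivWedge (q : M →ₗ[R] M) (x y : M) : ExteriorAlgebra R M :=
  ι R (q x) * ι R y + ι R x * ι R (q y)

theorem minor_derivWedge {q : M →ₗ[R] M} {x y : M} (f g : Module.Dual R M) :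
    minor f g (derivWedge q x y) =
      f (q x) * g y - f y * g (q x) + (f x * g (q y) - f (q y) * g x) := by
  rw [derivWedge, map_add, minor_ι_mul_ι, minor_ι_mul_ι]

end ExteriorAlgebra

namespace Module.Basis

open ExteriorAlgebra

section CommRing

variable {κ R M : Type*} [CommRing R] [AddCommGroup M] [Module R M]

theorem le_comap_of_forall_mem {M' : Type*} [AddCommGroup M'] [Module R M'] {p : Submodule R M}
    {N : Submodule R M'} (b : Basis κ R p) (f : M →ₗ[R] M') (h : ∀ i, f (b i) ∈ N) :
    p ≤ N.comap f := by
  have hp : p = Submodule.span R (Set.range (p.subtype ∘ b)) := by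
    rw [Set.range_comp, Submodule.span_image, b.span_eq, Submodule.map_subtype_top]
  rw [hp, Submodule.span_le]
  rintro _ ⟨i, rfl⟩
  exact h i

variable (b : Basis κ R M) {q : M →ₗ[R] M} {i j k : κ}

theorem repr_map_add_repr_map_of_derivWedge_eq_zero (h : derivWedge q (b i) (b j) = 0)
    (hij : i ≠ j := by decide) :
    b.repr (q (b i)) i + b.repr (q (b j)) j = 0 := by
  simpa [minor_derivWedge, hij, hij.symm] using congrArg (minor (b.coord i) (b.coord j)) h

theorem repr_map_left_eq_zero_of_derivWedge_eq_zero (h : derivWedge q (b i) (b j) = 0)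
    (hij : i ≠ j := by decide) (hki : k ≠ i := by decide) (hkj : k ≠ j := by decide) :
    b.repr (q (b i)) k = 0 := by
  simpa [minor_derivWedge, hij.symm, hki, hkj] using congrArg (minor (b.coord k) (b.coord j)) h

theorem repr_map_right_eq_zero_of_derivWedge_eq_zero (h : derivWedge q (b i) (b j) = 0)
    (hij : i ≠ j := by decide) (hki : k ≠ i := by decide) (hkj : k ≠ j := by decide) :
    b.repr (q (b j)) k = 0 := by
  simpa [minor_derivWedge, hij, hki, hkj] using congrArg (minor (b.coord i) (b.coord k)) h

end CommRing

section Field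

open Sum

variable {K V : Type*} [Field K] [NeZero (2 : K)] [AddCommGroup V] [Module K V]
  (b : Basis (Fin 2 ⊕ Fin 2) K V) {q : V →ₗ[K] V}

theorem map_eq_zero_of_derivWedge_eq_zero
    (hp : derivWedge q (b (inl 0)) (b (inl 1)) = 0)
    (hm : derivWedge q (b (inr 0)) (b (inr 1)) = 0)
    (hpm : ∀ j, derivWedge q (b (inl 0)) (b (inr j)) = 0) :
    q (b (inl 0)) = 0 ∧ (∀ j, q (b (inr j)) = 0) ∧ q (b (inl 1)) ∈ K ∙ b (inl 0) := by
  -- `σ, τ, s, t` stand for `b (inl 0), b (inl 1), b (inr 0), b (inr 1)`.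
  have hστ := b.repr_map_add_repr_map_of_derivWedge_eq_zero hp
  have hst := b.repr_map_add_repr_map_of_derivWedge_eq_zero hm
  have hσs := b.repr_map_add_repr_map_of_derivWedge_eq_zero (hpm 0)
  have hσt := b.repr_map_add_repr_map_of_derivWedge_eq_zero (hpm 1)
  have hσσ : b.repr (q (b (inl 0))) (inl 0) = 0 := by
    have h2 : (2 : K) * b.repr (q (b (inl 0))) (inl 0) = 0 := by
      linear_combination hσs + hσt - hst
    exact (mul_eq_zero.mp h2).resolve_left two_ne_zero
  have eq_zero : ∀ v, b.repr v (inl 0) = 0 → b.repr v (inl 1) = 0 →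
      b.repr v (inr 0) = 0 → b.repr v (inr 1) = 0 → v = 0 := by
    intro v h₀ h₁ h₂ h₃
    rw [← b.forall_coord_eq_zero_iff]
    rintro (k | k) <;> fin_cases k <;> assumption
  refine ⟨?_, Fin.forall_fin_two.mpr ⟨?_, ?_⟩, ?_⟩
  · exact eq_zero _ hσσ (b.repr_map_left_eq_zero_of_derivWedge_eq_zero (hpm 0))
      (b.repr_map_left_eq_zero_of_derivWedge_eq_zero (hpm 1))
      (b.repr_map_left_eq_zero_of_derivWedge_eq_zero (hpm 0))
  · exact eq_zero _ (b.repr_map_left_eq_zero_of_derivWedge_eq_zero hm)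
      (b.repr_map_left_eq_zero_of_derivWedge_eq_zero hm) (by linear_combination hσs - hσσ)
      (b.repr_map_right_eq_zero_of_derivWedge_eq_zero (hpm 0))
  · exact eq_zero _ (b.repr_map_right_eq_zero_of_derivWedge_eq_zero hm)
      (b.repr_map_right_eq_zero_of_derivWedge_eq_zero hm)
      (b.repr_map_right_eq_zero_of_derivWedge_eq_zero (hpm 1)) (by linear_combination hσt - hσσ)
  · refine Submodule.mem_span_singleton.mpr ⟨b.repr (q (b (inl 1))) (inl 0),
      (sub_eq_zero.mp (eq_zero _ ?_ ?_ ?_ ?_)).symm⟩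
    · simp
    · simp [show b.repr (q (b (inl 1))) (inl 1) = 0 by linear_combination hστ - hσσ]
    · simp [b.repr_map_right_eq_zero_of_derivWedge_eq_zero hp (k := inr 0)]
    · simp [b.repr_map_right_eq_zero_of_derivWedge_eq_zero hp (k := inr 1)]

end Field

end Module.Basis

theorem Module.exists_basis_fin_two_apply_zero {K W : Type*} [Field K] [AddCommGroup W]
    [Module K W] (h : finrank K W = 2) {x : W} (hx : x ≠ 0) :
    ∃ b : Basis (Fin 2) K W, b 0 = x := by
  obtain ⟨y, hxy⟩ :=
    exists_linearIndependent_pair_of_one_lt_finrank (by omega : 1 < finrank K W) hx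
  exact ⟨basisOfLinearIndependentOfCardEqFinrank hxy (by simp [h]), by simp⟩

open Module Sum in
theorem statement15_general
    (Sp Sm Lp : Submodule ℂ C4)
    (hSp : Module.finrank ℂ Sp = 2) (hSm : Module.finrank ℂ Sm = 2)
    (hcompl : IsCompl Sp Sm)
    (hLp : Lp ≤ Sp) (hLpdim : Module.finrank ℂ Lp = 1)
    (q : C4 →ₗ[ℂ] C4)
    (h1 : ∀ x ∈ Sp, ∀ y ∈ Sp,
      ι ℂ (q x) * ι ℂ y + ι ℂ x * ι ℂ (q y) = (0 : ExteriorAlgebra ℂ C4))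
    (h2 : ∀ x ∈ Sm, ∀ y ∈ Sm,
      ι ℂ (q x) * ι ℂ y + ι ℂ x * ι ℂ (q y) = (0 : ExteriorAlgebra ℂ C4))
    (h3 : ∀ σ ∈ Lp, ∀ s ∈ Sm,
      ι ℂ (q σ) * ι ℂ s + ι ℂ σ * ι ℂ (q s) = (0 : ExteriorAlgebra ℂ C4)) :
    (∀ x ∈ Sm, q x = 0) ∧ (∀ σ ∈ Lp, q σ = 0) ∧ (∀ x ∈ Sp, q x ∈ Lp) := by
  have : Nontrivial Lp := nontrivial_of_finrank_eq_succ hLpdim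
  obtain ⟨⟨σ, hσ⟩, hσ0⟩ := exists_ne (0 : Lp)
  replace hσ0 : σ ≠ 0 := by simpa using hσ0
  have hLσ : Lp = ℂ ∙ σ := eq_span_singleton_of_mem_of_finrank_eq_one hLpdim hσ hσ0
  obtain ⟨bp, hbp0⟩ :=
    exists_basis_fin_two_apply_zero hSp (x := ⟨σ, hLp hσ⟩) (by simpa using hσ0)
  let bm := finBasisOfFinrankEq ℂ Sm hSm
  let b := (bp.prod bm).map (Submodule.prodEquivOfIsCompl Sp Sm hcompl)
  have hbp : ∀ i, b (inl i) = bp i := by simp [b]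
  have hbm : ∀ j, b (inr j) = bm j := by simp [b]
  have hbσ : b (inl 0) = σ := by simp [hbp, hbp0]
  obtain ⟨hqσ, hqm, hqτ⟩ := b.map_eq_zero_of_derivWedge_eq_zero
    (by rw [hbp, hbp]; exact h1 _ (bp 0).2 _ (bp 1).2)
    (by rw [hbm, hbm]; exact h2 _ (bm 0).2 _ (bm 1).2)
    (fun j => by rw [hbσ, hbm]; exact h3 _ hσ _ (bm j).2)
  rw [hbσ, ← hLσ] at hqτ
  rw [hbσ] at hqσ
  refine ⟨fun x hx => ?_, fun x hx => ?_, fun x hx => ?_⟩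
  · simpa using bm.le_comap_of_forall_mem q (N := ⊥) (fun j => by simpa [← hbm] using hqm j) hx
  · obtain ⟨c, rfl⟩ := Submodule.mem_span_singleton.mp (hLσ ▸ hx)
    simp [hqσ]
  · refine bp.le_comap_of_forall_mem q (fun i => ?_) hx
    rw [← hbp]
    fin_cases i
    · simp [hbσ, hqσ]
    · exact hqτ

/-- Let `ℂ⁴ = S⁺ ⊕ S⁻` with `dim S± = 2`, `L⁺ ⊆ S⁺` a line, and
`q` an endomorphism preserving `S⁺` and `S⁻` whose induced derivation of `⋀²ℂ⁴`
annihilates `⋀²S⁺`, `⋀²S⁻` and `L⁺ ∧ S⁻`.  Then `q` vanishes on `S⁻` and on `L⁺`,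
and `q(S⁺) ⊆ L⁺`. -/
theorem statement15
    (Sp Sm Lp : Submodule ℂ C4)
    (hSp : Module.finrank ℂ Sp = 2) (hSm : Module.finrank ℂ Sm = 2)
    (hcompl : IsCompl Sp Sm)
    (hLp : Lp ≤ Sp) (hLpdim : Module.finrank ℂ Lp = 1)
    (q : C4 →ₗ[ℂ] C4)
    (hqp : ∀ x ∈ Sp, q x ∈ Sp) (hqm : ∀ x ∈ Sm, q x ∈ Sm)
    (h1 : ∀ x ∈ Sp, ∀ y ∈ Sp,
      ι ℂ (q x) * ι ℂ y + ι ℂ x * ι ℂ (q y) = (0 : ExteriorAlgebra ℂ C4))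
    (h2 : ∀ x ∈ Sm, ∀ y ∈ Sm,
      ι ℂ (q x) * ι ℂ y + ι ℂ x * ι ℂ (q y) = (0 : ExteriorAlgebra ℂ C4))
    (h3 : ∀ σ ∈ Lp, ∀ s ∈ Sm,
      ι ℂ (q σ) * ι ℂ s + ι ℂ σ * ι ℂ (q s) = (0 : ExteriorAlgebra ℂ C4)) :
    (∀ x ∈ Sm, q x = 0) ∧ (∀ σ ∈ Lp, q σ = 0) ∧ (∀ x ∈ Sp, q x ∈ Lp) :=
  statement15_general Sp Sm Lp hSp hSm hcompl hLp hLpdim q h1 h2 h3
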